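/- Let A, B be n×n real symmetric matrices and f : ℝⁿ → ℝ symmetric strictly Schur-convex, F(X) = f(λ(X)). If X̄ is a global maximizer of F(X − A) over {X symmetric : λ(X) = λ(B)}, then λ(X̄ − A) = λ(X̄) + λ(−A), i.e., −A and X̄ strongly commute. -/

import Mathlib

/-!
For orthogonal `Q`, the diagonal of `Qᵀ (diagonal d) Q` is a doubly stochastic average of `d`,
so its partial sums over the indices of the largest entries of `d` are at most those of `d`
(Schur). This gives Ky Fan's inequality `λ(X̄ - A) ≺ λ(X̄) + λ(-A)`, and, used in both
directions, that `U (diagonal d) Uᵀ` has decreasing spectrum `d` whenever `d` is antitone.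
Conjugating `diagonal λ(X̄)` by an eigenbasis of `-A` ordered decreasingly gives a competitor
`X̂` isospectral to `X̄` with `λ(X̂ - A) = λ(X̄) + λ(-A)`; this majorizes `λ(X̄ - A)`, so
maximality of `X̄` and strict Schur-convexity of `f` force equality.
-/

open Finset

/-- Decreasing rearrangement of a vector in ℝⁿ. -/
noncomputable def dsort {n : ℕ} (u : Fin n → ℝ) : Fin n → ℝ :=
  u ∘ Tuple.sort (fun i => -u i)

/-- `Maj u v` : `u` is majorized by `v`. -/
def Maj {n : ℕ} (u v : Fin n → ℝ) : Prop :=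
  (∀ k : ℕ, ∑ i ∈ univ.filter (fun i : Fin n => (i : ℕ) < k), dsort u i ≤
      ∑ i ∈ univ.filter (fun i : Fin n => (i : ℕ) < k), dsort v i) ∧
  ∑ i, u i = ∑ i, v i

open Matrix

/-- Decreasingly ordered eigenvalue vector of a real symmetric matrix. -/
noncomputable def specVec {n : ℕ} {A : Matrix (Fin n) (Fin n) ℝ} (hA : A.IsHermitian) :
    Fin n → ℝ :=
  dsort hA.eigenvalues

/-- `A` and `B` strongly commute: a common orthonormal eigenbasis realizing both
decreasingly ordered spectra simultaneously. -/
def StrongCommute {n : ℕ} {A B : Matrix (Fin n) (Fin n) ℝ}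
    (hA : A.IsHermitian) (hB : B.IsHermitian) : Prop :=
  ∃ U : Matrix (Fin n) (Fin n) ℝ, U * Uᵀ = 1 ∧
    Uᵀ * A * U = Matrix.diagonal (specVec hA) ∧
    Uᵀ * B * U = Matrix.diagonal (specVec hB)

section Bathtub

variable {ι : Type*} [Fintype ι]

theorem sum_mul_le_sum_of_threshold (s : Finset ι) {c d : ι → ℝ} {m : ℝ}
    (hc0 : ∀ i, 0 ≤ c i) (hc1 : ∀ i, c i ≤ 1) (hsum : ∑ i, c i = #s)
    (hin : ∀ i ∈ s, m ≤ d i) (hout : ∀ i ∉ s, d i ≤ m) :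
    ∑ i, c i * d i ≤ ∑ i ∈ s, d i := by
  classical
  have hterm : ∀ i, (c i - if i ∈ s then 1 else 0) * (d i - m) ≤ 0 := by
    intro i
    split_ifs with hi
    · exact mul_nonpos_of_nonpos_of_nonneg (by linarith [hc1 i]) (by linarith [hin i hi])
    · exact mul_nonpos_of_nonneg_of_nonpos (by linarith [hc0 i]) (by linarith [hout i hi])
  have hexpand : ∑ i, (c i - if i ∈ s then 1 else 0) * (d i - m)
      = ∑ i, c i * d i - ∑ i ∈ s, d i - m * (∑ i, c i - #s) := by
    simp only [sub_mul, mul_sub, ite_mul, one_mul, zero_mul, sum_sub_distrib, sum_ite_mem,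
      univ_inter, ← sum_mul, sum_const, nsmul_eq_mul]
    ring
  rw [hsum, sub_self, mul_zero, sub_zero] at hexpand
  linarith [sum_nonpos fun i (_ : i ∈ univ) => hterm i]

theorem sum_mul_le_sum_of_separates (s : Finset ι) {c d : ι → ℝ}
    (hc0 : ∀ i, 0 ≤ c i) (hc1 : ∀ i, c i ≤ 1) (hsum : ∑ i, c i = #s)
    (hsep : ∀ i ∈ s, ∀ j ∉ s, d j ≤ d i) :
    ∑ i, c i * d i ≤ ∑ i ∈ s, d i := by
  rcases s.eq_empty_or_nonempty with rfl | hs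
  · have hc : ∀ i, c i = 0 := fun i =>
      (sum_eq_zero_iff_of_nonneg fun j _ => hc0 j).mp (by simpa using hsum) i (mem_univ i)
    simp [hc]
  · exact sum_mul_le_sum_of_threshold s hc0 hc1 hsum (fun i hi => inf'_le d hi)
      fun j hj => le_inf' hs d fun i hi => hsep i hi j hj

end Bathtub

section Orthogonal

variable {ι : Type*} [Fintype ι] [DecidableEq ι]

theorem sum_sq_row_eq_one {Q : Matrix ι ι ℝ} (hQ : Q ∈ orthogonalGroup ι ℝ) (j : ι) :
    ∑ i, Q j i ^ 2 = 1 := by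
  simpa [Matrix.mul_apply, sq] using
    congrFun (congrFun ((mem_orthogonalGroup_iff ι ℝ).mp hQ) j) j

theorem sum_sq_col_eq_one {Q : Matrix ι ι ℝ} (hQ : Q ∈ orthogonalGroup ι ℝ) (i : ι) :
    ∑ j, Q j i ^ 2 = 1 := by
  simpa [Matrix.mul_apply, sq] using
    congrFun (congrFun ((mem_orthogonalGroup_iff' ι ℝ).mp hQ) i) i

theorem transpose_mul_conj_diagonal_mul {U : Matrix ι ι ℝ} (hU : U ∈ orthogonalGroup ι ℝ)
    (d : ι → ℝ) : Uᵀ * (U * diagonal d * Uᵀ) * U = diagonal d := by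
  have h := (mem_orthogonalGroup_iff' ι ℝ).mp hU
  simp only [← Matrix.mul_assoc, h, Matrix.one_mul]
  rw [Matrix.mul_assoc, h, Matrix.mul_one]

/-- Schur's majorization of the diagonal by the spectrum, summed over a set `s` carrying the
largest entries of `d`. -/
theorem sum_diag_conj_diagonal_le {Q : Matrix ι ι ℝ} (hQ : Q ∈ orthogonalGroup ι ℝ)
    (d : ι → ℝ) (s : Finset ι) (hsep : ∀ i ∈ s, ∀ j ∉ s, d j ≤ d i) :
    ∑ i ∈ s, (Qᵀ * diagonal d * Q) i i ≤ ∑ i ∈ s, d i := by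
  have hentry : ∀ i, (Qᵀ * diagonal d * Q) i i = ∑ j, Q j i ^ 2 * d j := fun i => by
    rw [Matrix.mul_apply]
    simp only [mul_diagonal, transpose_apply]
    exact sum_congr rfl fun j _ => by ring
  calc ∑ i ∈ s, (Qᵀ * diagonal d * Q) i i
      = ∑ j, (∑ i ∈ s, Q j i ^ 2) * d j := by
        simp only [hentry, sum_mul]
        exact sum_comm
    _ ≤ ∑ i ∈ s, d i := by
        refine sum_mul_le_sum_of_separates s (fun j => sum_nonneg fun i _ => sq_nonneg _)
          (fun j => ?_) ?_ hsep
        · exact (sum_le_sum_of_subset_of_nonneg (subset_univ s) fun i _ _ => sq_nonneg _).trans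
            (sum_sq_row_eq_one hQ j).le
        · rw [sum_comm]
          simp [sum_sq_col_eq_one hQ]

end Orthogonal

namespace SpectrumMajorization

def initSeg (n k : ℕ) : Finset (Fin n) := univ.filter fun i => (i : ℕ) < k

variable {n : ℕ}

theorem dsort_antitone (u : Fin n → ℝ) : Antitone (dsort u) := fun _ _ hij =>
  neg_le_neg_iff.mp (Tuple.monotone_sort (fun i => -u i) hij)

theorem dsort_eq_self {u : Fin n → ℝ} (hu : Antitone u) : dsort u = u := by
  have hm : Monotone (fun i => -u i) := fun _ _ hij => neg_le_neg (hu hij)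
  rw [dsort, Tuple.sort_eq_refl_iff_monotone.mpr hm]
  rfl

theorem antitone_specVec {M : Matrix (Fin n) (Fin n) ℝ} (hM : M.IsHermitian) :
    Antitone (specVec hM) := dsort_antitone _

theorem sum_initSeg_succ (u : Fin n → ℝ) {k : ℕ} (hk : k < n) :
    ∑ i ∈ initSeg n (k + 1), u i = ∑ i ∈ initSeg n k, u i + u ⟨k, hk⟩ := by
  have hins : initSeg n (k + 1) = insert ⟨k, hk⟩ (initSeg n k) := by
    ext i
    simp only [initSeg, mem_filter, mem_univ, true_and, mem_insert, Fin.ext_iff]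
    omega
  rw [hins, sum_insert (by simp [initSeg]), add_comm]

theorem eq_of_sum_initSeg_eq {u v : Fin n → ℝ}
    (h : ∀ k, ∑ i ∈ initSeg n k, u i = ∑ i ∈ initSeg n k, v i) : u = v := by
  funext i
  have hsucc := h (i + 1)
  rw [sum_initSeg_succ u i.isLt, sum_initSeg_succ v i.isLt, h i] at hsucc
  simpa using hsucc

theorem antitone_separates_initSeg {d : Fin n → ℝ} (hd : Antitone d) (k : ℕ) :
    ∀ i ∈ initSeg n k, ∀ j ∉ initSeg n k, d j ≤ d i := by
  intro i hi j hj
  simp only [initSeg, mem_filter, mem_univ, true_and, not_lt] at hi hj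
  exact hd (Fin.le_def.mpr (by omega))

theorem antitone_specVec_add {X Y : Matrix (Fin n) (Fin n) ℝ} (hX : X.IsHermitian)
    (hY : Y.IsHermitian) : Antitone (specVec hX + specVec hY) :=
  (antitone_specVec hX).add (antitone_specVec hY)

theorem exists_orthogonal_eq_conj_specVec {M : Matrix (Fin n) (Fin n) ℝ}
    (hM : M.IsHermitian) :
    ∃ U ∈ orthogonalGroup (Fin n) ℝ, M = U * diagonal (specVec hM) * Uᵀ := by
  set V := (hM.eigenvectorUnitary : Matrix (Fin n) (Fin n) ℝ)
  set σ := Tuple.sort fun i => -hM.eigenvalues i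
  have hV : V ∈ orthogonalGroup (Fin n) ℝ := hM.eigenvectorUnitary.2
  have hMV : M = V * diagonal hM.eigenvalues * Vᵀ := by
    have h := hM.spectral_theorem
    rwa [Unitary.conjStarAlgAut_apply, star_eq_conjTranspose,
      conjTranspose_eq_transpose_of_trivial, RCLike.ofReal_real_eq_id, Function.id_comp] at h
  refine ⟨V.submatrix id σ, ?_, ?_⟩
  · rw [mem_orthogonalGroup_iff, transpose_submatrix, submatrix_mul_equiv,
      (mem_orthogonalGroup_iff (Fin n) ℝ).mp hV, submatrix_id_id]
  · rw [specVec, dsort, ← submatrix_diagonal_equiv, transpose_submatrix, submatrix_mul_equiv,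
      submatrix_mul_equiv, submatrix_id_id, ← hMV]

theorem sum_initSeg_diag_conj_le {M U W : Matrix (Fin n) (Fin n) ℝ} {d : Fin n → ℝ}
    (hU : U ∈ orthogonalGroup (Fin n) ℝ) (hW : W ∈ orthogonalGroup (Fin n) ℝ)
    (hd : Antitone d) (hM : M = U * diagonal d * Uᵀ) (k : ℕ) :
    ∑ i ∈ initSeg n k, (Wᵀ * M * W) i i ≤ ∑ i ∈ initSeg n k, d i := by
  have hQ : Wᵀ * M * W = (Uᵀ * W)ᵀ * diagonal d * (Uᵀ * W) := by
    rw [hM, transpose_mul, transpose_transpose]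
    simp only [Matrix.mul_assoc]
  rw [hQ]
  exact sum_diag_conj_diagonal_le (mul_mem (Unitary.star_mem hU) hW) d _
    (antitone_separates_initSeg hd k)

theorem sum_initSeg_le_of_conj_diagonal_eq {U W : Matrix (Fin n) (Fin n) ℝ} {d e : Fin n → ℝ}
    (hU : U ∈ orthogonalGroup (Fin n) ℝ) (hW : W ∈ orthogonalGroup (Fin n) ℝ)
    (hd : Antitone d) (h : W * diagonal e * Wᵀ = U * diagonal d * Uᵀ) (k : ℕ) :
    ∑ i ∈ initSeg n k, e i ≤ ∑ i ∈ initSeg n k, d i := by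
  simpa [transpose_mul_conj_diagonal_mul hW] using sum_initSeg_diag_conj_le hU hW hd h k

theorem specVec_eq_of_eq_conj_diagonal {M U : Matrix (Fin n) (Fin n) ℝ} (hM : M.IsHermitian)
    {d : Fin n → ℝ} (hU : U ∈ orthogonalGroup (Fin n) ℝ) (hd : Antitone d)
    (hMd : M = U * diagonal d * Uᵀ) : specVec hM = d := by
  obtain ⟨V, hV, hMV⟩ := exists_orthogonal_eq_conj_specVec hM
  refine eq_of_sum_initSeg_eq fun k => le_antisymm ?_ ?_
  · exact sum_initSeg_le_of_conj_diagonal_eq hU hV hd (hMV.symm.trans hMd) k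
  · exact sum_initSeg_le_of_conj_diagonal_eq hV hU (antitone_specVec hM) (hMd.symm.trans hMV) k

theorem sum_specVec {M : Matrix (Fin n) (Fin n) ℝ} (hM : M.IsHermitian) :
    ∑ i, specVec hM i = M.trace := by
  obtain ⟨U, hU, hMU⟩ := exists_orthogonal_eq_conj_specVec hM
  conv_rhs => rw [hMU]
  rw [trace_mul_cycle, (mem_orthogonalGroup_iff' (Fin n) ℝ).mp hU, Matrix.one_mul,
    trace_diagonal]

/-- Ky Fan's inequality. -/
theorem maj_specVec_add {X Y S : Matrix (Fin n) (Fin n) ℝ} (hX : X.IsHermitian)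
    (hY : Y.IsHermitian) (hS : S.IsHermitian) (hXY : S = X + Y) :
    Maj (specVec hS) (specVec hX + specVec hY) := by
  refine ⟨fun k => ?_, ?_⟩
  · change ∑ i ∈ initSeg n k, _ ≤ ∑ i ∈ initSeg n k, _
    rw [dsort_eq_self (antitone_specVec hS), dsort_eq_self (antitone_specVec_add hX hY)]
    obtain ⟨W, hW, hSW⟩ := exists_orthogonal_eq_conj_specVec hS
    obtain ⟨U, hU, hXU⟩ := exists_orthogonal_eq_conj_specVec hX
    obtain ⟨V, hV, hYV⟩ := exists_orthogonal_eq_conj_specVec hY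
    have hconj : Wᵀ * X * W + Wᵀ * Y * W = diagonal (specVec hS) := by
      rw [← Matrix.add_mul, ← Matrix.mul_add, ← hXY]
      exact (congrArg (fun M => Wᵀ * M * W) hSW).trans (transpose_mul_conj_diagonal_mul hW _)
    calc ∑ i ∈ initSeg n k, specVec hS i
        = ∑ i ∈ initSeg n k, ((Wᵀ * X * W) i i + (Wᵀ * Y * W) i i) :=
          sum_congr rfl fun i _ => by simp [← Matrix.add_apply, hconj]
      _ ≤ ∑ i ∈ initSeg n k, specVec hX i + ∑ i ∈ initSeg n k, specVec hY i := by
          rw [sum_add_distrib]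
          exact add_le_add (sum_initSeg_diag_conj_le hU hW (antitone_specVec hX) hXU k)
            (sum_initSeg_diag_conj_le hV hW (antitone_specVec hY) hYV k)
      _ = ∑ i ∈ initSeg n k, (specVec hX + specVec hY) i := sum_add_distrib.symm
  · simp only [Pi.add_apply, sum_add_distrib, sum_specVec, hXY, trace_add]

theorem exists_isospectral_specVec_sub_eq_add {Y A : Matrix (Fin n) (Fin n) ℝ}
    (hY : Y.IsHermitian) (hA : A.IsHermitian) :
    ∃ (X : Matrix (Fin n) (Fin n) ℝ) (hX : X.IsHermitian), specVec hX = specVec hY ∧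
      specVec (hX.sub hA) = specVec hY + specVec hA.neg := by
  obtain ⟨U, hU, hAU⟩ := exists_orthogonal_eq_conj_specVec hA.neg
  have hX : (U * diagonal (specVec hY) * Uᵀ).IsHermitian := by
    have h := isHermitian_mul_mul_conjTranspose U (isHermitian_diagonal (specVec hY))
    rwa [conjTranspose_eq_transpose_of_trivial] at h
  refine ⟨_, hX, specVec_eq_of_eq_conj_diagonal hX hU (antitone_specVec hY) rfl,
    specVec_eq_of_eq_conj_diagonal _ hU (antitone_specVec_add hY hA.neg) ?_⟩
  rw [sub_eq_add_neg, Pi.add_def, ← diagonal_add, Matrix.mul_add, Matrix.add_mul, ← hAU]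

end SpectrumMajorization

open SpectrumMajorization

theorem stmt18_general {n : ℕ} {A B Xbar : Matrix (Fin n) (Fin n) ℝ}
    (hA : A.IsHermitian) (hB : B.IsHermitian) (hXbar : Xbar.IsHermitian)
    (f : (Fin n → ℝ) → ℝ)
    (hschur : ∀ u v : Fin n → ℝ, Maj u v → dsort u ≠ dsort v → f u < f v)
    (hspec : specVec hXbar = specVec hB)
    (hmax : ∀ (X : Matrix (Fin n) (Fin n) ℝ) (hX : X.IsHermitian),
      specVec hX = specVec hB →
      f (specVec (hX.sub hA)) ≤ f (specVec (hXbar.sub hA))) :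
    specVec (hXbar.sub hA) = specVec hXbar + specVec hA.neg := by
  obtain ⟨X, hX, hXspec, hXA⟩ := exists_isospectral_specVec_sub_eq_add hXbar hA
  have hmaj : Maj (specVec (hXbar.sub hA)) (specVec hXbar + specVec hA.neg) :=
    maj_specVec_add hXbar hA.neg _ (sub_eq_add_neg Xbar A)
  by_contra hne
  have hlt := hschur _ _ hmaj (by
    rwa [dsort_eq_self (antitone_specVec _),
      dsort_eq_self (antitone_specVec_add hXbar hA.neg)])
  have hle := hmax X hX (hXspec.trans hspec)
  rw [hXA] at hle
  exact hle.not_gt hlt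

theorem stmt18 {n : ℕ} {A B Xbar : Matrix (Fin n) (Fin n) ℝ}
    (hA : A.IsHermitian) (hB : B.IsHermitian) (hXbar : Xbar.IsHermitian)
    (f : (Fin n → ℝ) → ℝ)
    (hsymm : ∀ (σ : Equiv.Perm (Fin n)) (u : Fin n → ℝ), f (u ∘ σ) = f u)
    (hschur : ∀ u v : Fin n → ℝ, Maj u v → dsort u ≠ dsort v → f u < f v)
    (hspec : specVec hXbar = specVec hB)
    (hmax : ∀ (X : Matrix (Fin n) (Fin n) ℝ) (hX : X.IsHermitian),
      specVec hX = specVec hB →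
      f (specVec (hX.sub hA)) ≤ f (specVec (hXbar.sub hA))) :
    specVec (hXbar.sub hA) = specVec hXbar + specVec hA.neg :=
  stmt18_general hA hB hXbar f hschur hspec hmax
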